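/- arXiv:math/0606528 — 2 statements merged into one kernel-verified Lean document; each statement's English description precedes it below -/
import Mathlib

section
/- Let V be a Hausdorff space, T ⊂ V a compact subspace, W a pointed space, and a: V → W, b: V/T → W, c: T → W maps with b ∘ pr = a and c = a|_T (so c is constant). Let j: F(c) → F(a) and l: F(a) → F(b) be the maps of homotopy fibers induced by the inclusion T → V and projection V → V/T respectively. Let (Y, X) be a pair of pointed spaces with X ⊂ Y, and s: F(a) → X, t: F(b) → Y maps such that in ∘ s and t ∘ l are homotopic rel j(F(c)), where in: X → Y is the inclusion. Then there exists a unique map r: F(b) → X with r ∘ l = s, and in ∘ r is homotopic to t rel the fiber p(b)^{-1}(q_0) over the basepoint q_0 of V/T. -/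
/-!
As `V` is Hausdorff and `T` compact, the collapse `V → V/T` is a proper map, hence so is its
product with the identity of the path space; restricted to homotopy fibres it becomes `l`, which
is therefore a closed surjection and so a quotient map. Two points of `F(a)` with the same image
under `l` are equal or both lie in `j(F(c))`, where the homotopy `in ∘ s ≃ t ∘ l` is stationary
with value `t ∘ l`. Hence `s` and every stage of the homotopy are constant on the fibres of `l` and
descend along it: `s` to `r`, the homotopy (as `I` is locally compact) to `in ∘ r ≃ t`. The latter
is stationary over the basepoint because that fibre of `p(b)` is `l(j(F(c)))`.
-/

open scoped unitInterval Topology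
open ContinuousMap
open scoped Classical
noncomputable section

/-- The based path space `PW` of paths starting at the basepoint. -/
def PathSp (W : Type) [TopologicalSpace W] (w0 : W) : Type := {v : C(I, W) // v 0 = w0}

instance (W : Type) [TopologicalSpace W] (w0 : W) : TopologicalSpace (PathSp W w0) :=
  instTopologicalSpaceSubtype

/-- The homotopy fibre `F(g) = {(x, v) ∈ V × PW ∣ g x = v 1}` of a map `g : V → W`. -/
def HFiber {V : Type} (W : Type) [TopologicalSpace V] [TopologicalSpace W] (w0 : W)
    (g : C(V, W)) : Type :=
  {p : V × PathSp W w0 // g p.1 = p.2.1 1}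

instance {V : Type} (W : Type) [TopologicalSpace V] [TopologicalSpace W] (w0 : W)
    (g : C(V, W)) : TopologicalSpace (HFiber W w0 g) := instTopologicalSpaceSubtype

/-- The fibration `p(g) : F(g) → V`. -/
def hfProj {V W : Type} [TopologicalSpace V] [TopologicalSpace W] (w0 : W) (g : C(V, W)) :
    C(HFiber W w0 g, V) :=
  ⟨fun p => p.1.1, (continuous_fst.comp continuous_subtype_val)⟩

/-- The map of homotopy fibres induced by a map `φ` with `g' ∘ φ = g`. -/
def hfMap {V V' W : Type} [TopologicalSpace V] [TopologicalSpace V'] [TopologicalSpace W]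
    {w0 : W} {g : C(V, W)} {g' : C(V', W)} (φ : C(V, V')) (hφ : ∀ x, g' (φ x) = g x) :
    C(HFiber W w0 g, HFiber W w0 g') :=
  ⟨fun p => ⟨(φ p.1.1, p.1.2), by rw [hφ]; exact p.2⟩, by
    apply Continuous.subtype_mk
    exact (φ.continuous.comp (continuous_fst.comp continuous_subtype_val)).prodMk
      (continuous_snd.comp continuous_subtype_val)⟩

/-- The quotient `V/T` collapsing `T` to a point. -/
def QuotBy {V : Type} (T : Set V) : Type := Quot (fun x y => x ∈ T ∧ y ∈ T)

instance {V : Type} [TopologicalSpace V] (T : Set V) : TopologicalSpace (QuotBy T) :=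
  instTopologicalSpaceQuot

/-- The projection `V → V/T`. -/
def quotByProj {V : Type} [TopologicalSpace V] (T : Set V) : C(V, QuotBy T) :=
  ⟨Quot.mk _, continuous_quot_mk⟩

open Topology

section Descent

variable {A B Y : Type*} [TopologicalSpace A] [TopologicalSpace B] [TopologicalSpace Y]
  {l : C(A, B)} {S' : Set A}

theorem ContinuousMap.HomotopyRel.apply_eq_of_map_eq
    (hinj : ∀ ⦃p p'⦄, l p = l p' → p = p' ∨ p ∈ S' ∧ p' ∈ S')
    {f : C(A, Y)} {g : C(B, Y)} (H : f.HomotopyRel (g.comp l) S') (u : I) {p p' : A}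
    (hpp' : l p = l p') : H (u, p) = H (u, p') := by
  rcases hinj hpp' with rfl | ⟨hp, hp'⟩
  · rfl
  · rw [H.eq_snd u hp, H.eq_snd u hp', comp_apply, comp_apply, hpp']

theorem ContinuousMap.HomotopicRel.of_comp_isQuotientMap (hl : IsQuotientMap l)
    (hinj : ∀ ⦃p p'⦄, l p = l p' → p = p' ∨ p ∈ S' ∧ p' ∈ S')
    {f g : C(B, Y)} {S : Set B} (hS : l ⁻¹' S ⊆ S')
    (h : (f.comp l).HomotopicRel (g.comp l) S') : f.HomotopicRel g S := by
  obtain ⟨H⟩ := h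
  set sec := Function.surjInv hl.surjective
  have hsec : ∀ q, l (sec q) = q := Function.surjInv_eq hl.surjective
  have hK : Continuous fun x : I × B => H (x.1, sec x.2) :=
    hl.continuous_lift_prod_right <| by
      simpa only [H.apply_eq_of_map_eq hinj _ (hsec (l _))] using H.continuous
  refine ⟨⟨⟨⟨fun x => H (x.1, sec x.2), hK⟩, fun q => ?_, fun q => ?_⟩, fun u q hq => ?_⟩⟩
  · simp only [H.apply_zero, comp_apply, hsec]
  · simp only [H.apply_one, comp_apply, hsec]
  · simp only [coe_mk]
    rw [H.eq_fst u (hS (by rwa [Set.mem_preimage, hsec])), comp_apply, hsec]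

end Descent

section QuotBy

variable {V : Type} [TopologicalSpace V] {T : Set V}

theorem isQuotientMap_quotByProj : IsQuotientMap (quotByProj T) := isQuotientMap_quot_mk

theorem quotByProj_eq_iff {x y : V} :
    quotByProj T x = quotByProj T y ↔ x = y ∨ x ∈ T ∧ y ∈ T := by
  have hequiv : Equivalence fun x y : V => x = y ∨ x ∈ T ∧ y ∈ T :=
    ⟨fun _ => Or.inl rfl,
     fun | Or.inl h => Or.inl h.symm | Or.inr ⟨hx, hy⟩ => Or.inr ⟨hy, hx⟩,
     fun | Or.inl rfl, h => h | h, Or.inl rfl => h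
         | Or.inr ⟨hx, _⟩, Or.inr ⟨_, hz⟩ => Or.inr ⟨hx, hz⟩⟩
  refine ⟨fun h => hequiv.eqvGen_iff.mp ?_, ?_⟩
  · exact Relation.EqvGen.mono (fun _ _ => Or.inr) _ _ (Quot.eq.mp h)
  · rintro (rfl | h)
    · rfl
    · exact Quot.sound h

theorem mem_preimage_image_quotByProj {C : Set V} {x : V} :
    x ∈ quotByProj T ⁻¹' (quotByProj T '' C) ↔ x ∈ C ∨ x ∈ T ∧ (C ∩ T).Nonempty := by
  simp only [Set.mem_preimage, Set.mem_image, quotByProj_eq_iff]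
  constructor
  · rintro ⟨y, hy, rfl | ⟨hyT, hxT⟩⟩
    exacts [Or.inl hy, Or.inr ⟨hxT, y, hy, hyT⟩]
  · rintro (hx | ⟨hxT, y, hy, hyT⟩)
    exacts [⟨x, hx, Or.inl rfl⟩, ⟨y, hy, Or.inr ⟨hyT, hxT⟩⟩]

theorem isClosedMap_quotByProj (hT : IsClosed T) : IsClosedMap (quotByProj T) := by
  intro C hC
  rw [← isQuotientMap_quotByProj.isClosed_preimage]
  by_cases hCT : (C ∩ T).Nonempty
  · convert hC.union hT using 1
    ext x
    rw [mem_preimage_image_quotByProj]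
    simp [hCT]
  · convert hC using 1
    ext x
    rw [mem_preimage_image_quotByProj]
    simp [hCT]

theorem isProperMap_quotByProj (hTc : IsClosed T) (hT : IsCompact T) :
    IsProperMap (quotByProj T) := by
  refine isProperMap_iff_isClosedMap_and_compact_fibers.mpr
    ⟨(quotByProj T).continuous, isClosedMap_quotByProj hTc, fun q => ?_⟩
  obtain ⟨x, rfl⟩ := isQuotientMap_quotByProj.surjective q
  rw [← Set.image_singleton]
  by_cases hx : x ∈ T
  · convert hT.insert x using 1
    ext y
    rw [mem_preimage_image_quotByProj]
    simp only [Set.mem_singleton_iff, Set.singleton_inter_nonempty, hx, and_true,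
      Set.mem_insert_iff]
  · convert isCompact_singleton (x := x) using 1
    ext y
    rw [mem_preimage_image_quotByProj]
    simp [hx]

end QuotBy

section HFiber

variable {V V' W : Type} [TopologicalSpace V] [TopologicalSpace V'] [TopologicalSpace W]
  {w0 : W} {g : C(V, W)} {g' : C(V', W)}

theorem hfMap_eq_hfMap_iff {φ : C(V, V')} {hφ : ∀ x, g' (φ x) = g x}
    {p p' : HFiber W w0 g} :
    hfMap φ hφ p = hfMap φ hφ p' ↔ φ p.1.1 = φ p'.1.1 ∧ p.1.2 = p'.1.2 :=
  ⟨fun h => Prod.ext_iff.mp (congrArg Subtype.val h), fun h => Subtype.ext (Prod.ext_iff.mpr h)⟩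

theorem isQuotientMap_hfMap {φ : C(V, V')} (hφp : IsProperMap φ)
    (hφs : Function.Surjective φ) (hφ : ∀ x, g' (φ x) = g x) :
    IsQuotientMap (hfMap (w0 := w0) φ hφ) := by
  set Φ : V × PathSp W w0 → V' × PathSp W w0 := Prod.map φ id
  have hΦ : IsProperMap Φ := hφp.prodMap isProperMap_id
  set E : Set (V' × PathSp W w0) := {p | g' p.1 = p.2.1 1}
  have hE : IsQuotientMap (E.restrictPreimage Φ) :=
    (hΦ.restrictPreimage E).isClosedMap.isQuotientMap (hΦ.restrictPreimage E).continuous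
      (E.restrictPreimage_surjective (hφs.prodMap Function.surjective_id))
  let e : HFiber W w0 g ≃ₜ Φ ⁻¹' E :=
    (Homeomorph.refl _).subtype fun p => by simp [Φ, E, hφ]
  exact hE.comp e.isQuotientMap

theorem mem_range_hfMap_subtypeVal {T : Set V} {a : C(V, W)} (ha : ∀ x : T, a x = w0)
    {p : HFiber W w0 a} (hp : p.1.1 ∈ T) :
    p ∈ Set.range (hfMap (w0 := w0) (g := ContinuousMap.const T w0)
      (⟨Subtype.val, continuous_subtype_val⟩ : C(T, V)) ha) :=
  ⟨⟨(⟨p.1.1, hp⟩, p.1.2), (ha ⟨p.1.1, hp⟩).symm.trans p.2⟩, rfl⟩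

end HFiber

theorem hfiber_quotient_factorization_general
    (V : Type) [TopologicalSpace V] [T2Space V] (T : Set V) (hT : IsCompact T)
    (t0 : V) (ht0 : t0 ∈ T)
    (W : Type) [TopologicalSpace W] (w0 : W)
    (a : C(V, W)) (ha : ∀ x ∈ T, a x = w0)
    (b : C(QuotBy T, W)) (hb : ∀ x : V, b (quotByProj T x) = a x)
    (Y : Type) [TopologicalSpace Y] (X : Set Y)
    (s : C(HFiber W w0 a, X)) (t : C(HFiber W w0 (b : C(QuotBy T, W)), Y))
    (hst :
      ContinuousMap.HomotopicRel
        ((⟨Subtype.val, continuous_subtype_val⟩ : C(X, Y)).comp s)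
        (t.comp (hfMap (quotByProj T) hb))
        (Set.range
          (hfMap (w0 := w0) (g := ContinuousMap.const T w0)
            (⟨Subtype.val, continuous_subtype_val⟩ : C(T, V))
            (fun x => ha x x.2)))) :
    ∃ r : C(HFiber W w0 (b : C(QuotBy T, W)), X),
      (r.comp (hfMap (quotByProj T) hb) = s ∧
        ContinuousMap.HomotopicRel
          ((⟨Subtype.val, continuous_subtype_val⟩ : C(X, Y)).comp r) t
          {p : HFiber W w0 (b : C(QuotBy T, W)) | p.1.1 = quotByProj T t0}) ∧
      ∀ r' : C(HFiber W w0 (b : C(QuotBy T, W)), X),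
        r'.comp (hfMap (quotByProj T) hb) = s → r' = r := by
  set l := hfMap (w0 := w0) (quotByProj T) hb
  have hl : IsQuotientMap l :=
    isQuotientMap_hfMap (isProperMap_quotByProj hT.isClosed hT)
      isQuotientMap_quotByProj.surjective hb
  set J := Set.range (hfMap (w0 := w0) (g := ContinuousMap.const T w0)
    (⟨Subtype.val, continuous_subtype_val⟩ : C(T, V)) (fun x => ha x x.2))
  have hj : ∀ p : HFiber W w0 a, p.1.1 ∈ T → p ∈ J := fun _ =>
    mem_range_hfMap_subtypeVal (fun x => ha x x.2)
  have hinj : ∀ ⦃p p'⦄, l p = l p' → p = p' ∨ p ∈ J ∧ p' ∈ J := by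
    intro p p' hpp'
    obtain ⟨hx, hv⟩ := hfMap_eq_hfMap_iff.mp hpp'
    rcases quotByProj_eq_iff.mp hx with hx | ⟨hpT, hp'T⟩
    exacts [Or.inl (Subtype.ext (Prod.ext hx hv)), Or.inr ⟨hj p hpT, hj p' hp'T⟩]
  have hs : Function.FactorsThrough s l := fun p p' hpp' => Subtype.ext <| by
    simpa only [HomotopyWith.apply_zero, comp_apply, coe_mk] using hst.some.apply_eq_of_map_eq hinj 0 hpp'
  refine ⟨hl.lift s hs, ⟨hl.lift_comp s hs, ?_⟩, fun r' hr' => ?_⟩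
  · refine HomotopicRel.of_comp_isQuotientMap hl hinj (fun p hp => hj p ?_) ?_
    · rcases quotByProj_eq_iff.mp hp with h | ⟨h, _⟩
      exacts [h ▸ ht0, h]
    · rwa [comp_assoc, hl.lift_comp]
  · exact (cancel_right hl.surjective).mp (hr'.trans (hl.lift_comp s hs).symm)

/-- Lemma 2.7: for `V` Hausdorff, `T ⊆ V` compact, `a : V → W` constant on
`T`, `b : V/T → W` with `b ∘ pr = a`, `c = a|_T`, and maps `s : F(a) → X`, `t : F(b) → Y`
(`X ⊆ Y`) with `in ∘ s ≃ t ∘ l` rel `j(F(c))`, there is a unique `r : F(b) → X` with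
`r ∘ l = s`; moreover `in ∘ r ≃ t` rel the fibre over the basepoint of `V/T`. -/
theorem hfiber_quotient_factorization
    (V : Type) [TopologicalSpace V] [T2Space V] (T : Set V) (hT : IsCompact T)
    (t0 : V) (ht0 : t0 ∈ T)
    (W : Type) [TopologicalSpace W] (w0 : W)
    (a : C(V, W)) (ha : ∀ x ∈ T, a x = w0)
    (b : C(QuotBy T, W)) (hb : ∀ x : V, b (quotByProj T x) = a x)
    (Y : Type) [TopologicalSpace Y] (X : Set Y) (y0 : Y) (hy0 : y0 ∈ X)
    (s : C(HFiber W w0 a, X)) (t : C(HFiber W w0 (b : C(QuotBy T, W)), Y))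
    (hst :
      ContinuousMap.HomotopicRel
        ((⟨Subtype.val, continuous_subtype_val⟩ : C(X, Y)).comp s)
        (t.comp (hfMap (quotByProj T) hb))
        (Set.range
          (hfMap (w0 := w0) (g := ContinuousMap.const T w0)
            (⟨Subtype.val, continuous_subtype_val⟩ : C(T, V))
            (fun x => ha x x.2)))) :
    ∃ r : C(HFiber W w0 (b : C(QuotBy T, W)), X),
      (r.comp (hfMap (quotByProj T) hb) = s ∧
        ContinuousMap.HomotopicRel
          ((⟨Subtype.val, continuous_subtype_val⟩ : C(X, Y)).comp r) t
          {p : HFiber W w0 (b : C(QuotBy T, W)) | p.1.1 = quotByProj T t0}) ∧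
      ∀ r' : C(HFiber W w0 (b : C(QuotBy T, W)), X),
        r'.comp (hfMap (quotByProj T) hb) = s → r' = r :=
  hfiber_quotient_factorization_general V T hT t0 ht0 W w0 a ha b hb Y X s t hst

end
end

section
/- Let X be a pointed space, L an abelian group, and f: Π_n(X) → L a homotopy invariant functional with deg f ≤ r. Let b_0, b ∈ Π_n(X) be spheroids with [b_0] = 0 and [b] = [[…[[v_0, v_1], v_2], …, v_r]] an (r+1)-fold iterated Whitehead product of classes v_s ∈ π_{k_s}(X) with k_0 + … + k_r = n + r. Then f(b) = f(b_0). -/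
open scoped unitInterval Topology
open ContinuousMap
open scoped Classical

noncomputable section

abbrev Cube (n : ℕ) := Fin n → I

/-- Restriction of a continuous map to a subset of the cube. -/
def restrictMap {n : ℕ} {X : Type*} [TopologicalSpace X] (a : C(Cube n, X))
    (E : Set (Cube n)) : C(E, X) :=
  a.comp ⟨Subtype.val, continuous_subtype_val⟩

/-- `Π(E, X)`: maps `E → X` sending `E ∩ ∂Iⁿ` to the basepoint. -/
def PartMap {n : ℕ} (E : Set (Cube n)) (X : Type*) [TopologicalSpace X] (x0 : X) : Type _ :=
  {a : C(E, X) // ∀ y : E, (y : Cube n) ∈ Cube.boundary (Fin n) → a y = x0}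

/-- Restriction of a spheroid to `E`, as an element of `Π(E, X)`. -/
def sphRestrict {n : ℕ} {X : Type*} [TopologicalSpace X] {x0 : X}
    (a : GenLoop (Fin n) X x0) (E : Set (Cube n)) : PartMap E X x0 :=
  ⟨restrictMap a.1 E, fun y hy => a.2 y hy⟩

/-- The set `Γ(r)` of unions of at most `r` elements of `Γ`, as a `Finset`. -/
def coverUnions {n : ℕ} (Γ : Finset (Set (Cube n))) (r : ℕ) : Finset (Set (Cube n)) :=
  (Γ.powerset.filter fun S => S.card ≤ r).image fun S => ⋃₀ (S : Set (Set (Cube n)))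

/-- `deg f ≤ r`: for every finite open cover `Γ` of `Iⁿ` there are functionals
`g E : Π(E, X) → L`, `E ∈ Γ(r)`, with `f a = ∑_{E ∈ Γ(r)} g E (a|_E)`. -/
def HasDegLE {n : ℕ} {X : Type*} [TopologicalSpace X] {x0 : X} {L : Type*} [AddCommGroup L]
    (f : GenLoop (Fin n) X x0 → L) (r : ℕ) : Prop :=
  ∀ Γ : Finset (Set (Cube n)), (∀ E ∈ Γ, IsOpen E) → (∀ u : Cube n, ∃ E ∈ Γ, u ∈ E) →
    ∃ g : (E : Set (Cube n)) → (PartMap E X x0 → L),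
      ∀ a : GenLoop (Fin n) X x0, f a = ∑ E ∈ coverUnions Γ r, g E (sphRestrict a E)

/-- Map `[-1,1] → I`, `x ↦ (x+1)/2` (clamped). -/
def toI (x : ℝ) : I := Set.projIcc 0 1 zero_le_one ((x + 1) / 2)

/-- Cube coordinates recentred to `[-1,1]`. -/
def vmap {m : ℕ} (u : Cube m) : Fin m → ℝ := fun i => 2 * (u i : ℝ) - 1

/-- The sup-norm distance of a cube point from the centre. -/
def rfun {m : ℕ} (u : Cube m) : ℝ := ‖vmap u‖

lemma vmap_continuous (m : ℕ) : Continuous (vmap (m := m)) :=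
  continuous_pi fun i => by
    have : Continuous fun u : Cube m => (u i : ℝ) :=
      continuous_subtype_val.comp (continuous_apply i)
    continuity

lemma rfun_continuous (m : ℕ) : Continuous (rfun (m := m)) :=
  continuous_norm.comp (vmap_continuous m)

/-- The raw lateral coordinates of the collapse map. -/
def latRaw {m : ℕ} (u : Cube m) (i : Fin m) : ℝ :=
  min 1 (3 * (1 - rfun u)) * vmap u i / max (rfun u) (1 / 3) - max 0 (3 * rfun u - 2)

/-- The raw height coordinate of the collapse map. -/
def htRaw {m : ℕ} (u : Cube m) : ℝ := max (-1) (min 1 (3 - 6 * rfun u))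

lemma htRaw_continuous (m : ℕ) : Continuous (htRaw (m := m)) :=
  continuous_const.max (continuous_const.min
    (continuous_const.sub (continuous_const.mul (rfun_continuous m))))

/-- The degree-one collapse map `Iᵐ → ∂Iᵐ⁺¹` sending `∂Iᵐ` to the corner `(0,…,0)`. -/
def collapseCM (m : ℕ) : C(Cube m, Cube (m + 1)) := by
  refine ⟨fun u => Fin.snoc (fun i => toI (latRaw u i)) (toI (htRaw u)), ?_⟩
  apply continuous_pi
  intro i
  refine Fin.lastCases ?_ ?_ i
  · simp only [Fin.snoc_last]
    exact continuous_projIcc.comp (((htRaw_continuous m).add continuous_const).div_const 2)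
  · intro j
    simp only [Fin.snoc_castSucc]
    have hlat : Continuous fun u : Cube m => latRaw u j := by
      have hr := rfun_continuous m
      have hv : Continuous fun u : Cube m => vmap u j :=
        (continuous_apply j).comp (vmap_continuous m)
      have hden : Continuous fun u : Cube m => max (rfun u) (1 / 3) :=
        hr.max continuous_const
      have hden' : ∀ u : Cube m, max (rfun u) (1 / 3) ≠ 0 := fun u =>
        ne_of_gt (lt_of_lt_of_le (by norm_num) (le_max_right _ _))
      have hnum : Continuous fun u : Cube m => min 1 (3 * (1 - rfun u)) * vmap u j :=
        (continuous_const.min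
          (continuous_const.mul (continuous_const.sub hr))).mul hv
      exact (hnum.div hden hden').sub
        (continuous_const.max ((continuous_const.mul hr).sub continuous_const))
    exact continuous_projIcc.comp ((hlat.add continuous_const).div_const 2)

/-- First-block coordinates of a point of `I^{(k+1)+(l+1)}`. -/
def sPart {k l : ℕ} (w : Cube (k + 1 + (l + 1))) : Cube (k + 1) := fun i =>
  w (Fin.castAdd (l + 1) i)

/-- Second-block coordinates of a point of `I^{(k+1)+(l+1)}`. -/
def tPart {k l : ℕ} (w : Cube (k + 1 + (l + 1))) : Cube (l + 1) := fun j =>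
  w (Fin.natAdd (k + 1) j)

lemma isClosed_cubeBoundary (n : ℕ) : IsClosed (Cube.boundary (Fin n)) := by
  have h : Cube.boundary (Fin n) =
      ⋃ i : Fin n, ({y : Cube n | y i = 0} ∪ {y : Cube n | y i = 1}) := by
    ext y
    simp [Cube.boundary]
  rw [h]
  exact isClosed_iUnion_of_finite fun i =>
    (isClosed_eq (continuous_apply i) continuous_const).union
      (isClosed_eq (continuous_apply i) continuous_const)

lemma mem_boundary_split {k l : ℕ} {w : Cube (k + 1 + (l + 1))}
    (hw : w ∈ Cube.boundary (Fin (k + 1 + (l + 1)))) :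
    sPart w ∈ Cube.boundary (Fin (k + 1)) ∨ tPart w ∈ Cube.boundary (Fin (l + 1)) := by
  obtain ⟨i, hi⟩ := hw
  refine Fin.addCases (motive := fun i => w i = 0 ∨ w i = 1 →
    sPart w ∈ Cube.boundary (Fin (k + 1)) ∨ tPart w ∈ Cube.boundary (Fin (l + 1)))
    (fun j hj => Or.inl ⟨j, hj⟩) (fun j hj => Or.inr ⟨j, hj⟩) i hi

lemma abs_vmap_le_one {m : ℕ} (u : Cube m) (i : Fin m) : |vmap u i| ≤ 1 := by
  have h0 := (u i).2.1
  have h1 := (u i).2.2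
  rw [abs_le]
  constructor <;> [simp only [vmap]; simp only [vmap]] <;> nlinarith

lemma rfun_nonneg {m : ℕ} (u : Cube m) : 0 ≤ rfun u := norm_nonneg _

lemma rfun_le_one {m : ℕ} (u : Cube m) : rfun u ≤ 1 := by
  refine pi_norm_le_iff_of_nonneg zero_le_one |>.2 fun i => ?_
  simpa [Real.norm_eq_abs] using abs_vmap_le_one u i

lemma rfun_eq_one_of_boundary {m : ℕ} {u : Cube m} (hu : u ∈ Cube.boundary (Fin m)) :
    rfun u = 1 := by
  obtain ⟨i, hi⟩ := hu
  refine le_antisymm (rfun_le_one u) ?_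
  have h : |vmap u i| = 1 := by
    rcases hi with h | h <;> simp [vmap, h] <;> norm_num
  calc (1 : ℝ) = |vmap u i| := h.symm
    _ = ‖vmap u i‖ := (Real.norm_eq_abs _).symm
    _ ≤ ‖vmap u‖ := norm_le_pi_norm (vmap u) i
lemma toI_one : toI 1 = 1 := by
  apply Subtype.ext
  simp [toI, Set.projIcc]

lemma toI_neg_one : toI (-1) = 0 := by
  apply Subtype.ext
  simp [toI, Set.projIcc]

lemma collapse_mem_boundary (m : ℕ) (u : Cube m) :
    collapseCM m u ∈ Cube.boundary (Fin (m + 1)) := by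
  by_cases h1 : rfun u ≤ 1 / 3
  · refine ⟨Fin.last m, Or.inr ?_⟩
    show (Fin.snoc (fun j => toI (latRaw u j)) (toI (htRaw u)) : Cube (m + 1)) (Fin.last m) = 1
    rw [Fin.snoc_last]
    have hh : htRaw u = 1 := by
      have h2 : (1 : ℝ) ≤ 3 - 6 * rfun u := by linarith
      have h3 : min 1 (3 - 6 * rfun u) = 1 := min_eq_left h2
      rw [htRaw, h3]
      norm_num
    rw [hh, toI_one]
  · by_cases h2 : (2 : ℝ) / 3 ≤ rfun u
    · refine ⟨Fin.last m, Or.inl ?_⟩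
      show (Fin.snoc (fun j => toI (latRaw u j)) (toI (htRaw u)) : Cube (m + 1)) (Fin.last m) = 0
      rw [Fin.snoc_last]
      have hh : htRaw u = -1 := by
        have h3 : 3 - 6 * rfun u ≤ -1 := by linarith
        have h4 : min 1 (3 - 6 * rfun u) = 3 - 6 * rfun u := min_eq_right (by linarith)
        rw [htRaw, h4]
        exact max_eq_left h3
      rw [hh, toI_neg_one]
    · push_neg at h1 h2
      have hne : Nonempty (Fin m) := by
        rcases Nat.eq_zero_or_pos m with hm | hm
        · exfalso
          subst hm
          have hv : vmap u = 0 := funext fun i => i.elim0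
          rw [rfun, hv, norm_zero] at h1
          norm_num at h1
        · exact ⟨⟨0, hm⟩⟩
      obtain ⟨i, hi⟩ := Finite.exists_max fun i : Fin m => |vmap u i|
      have hri : |vmap u i| = rfun u := by
        refine le_antisymm ?_ ?_
        · exact (Real.norm_eq_abs _).symm.trans_le (norm_le_pi_norm (vmap u) i)
        · refine pi_norm_le_iff_of_nonneg (abs_nonneg _) |>.2 fun j => ?_
          simpa [Real.norm_eq_abs] using hi j
      have hr0 : rfun u ≠ 0 := by linarith
      have hlat : latRaw u i = vmap u i / rfun u := by
        have e1 : min 1 (3 * (1 - rfun u)) = 1 := min_eq_left (by linarith)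
        have e2 : max (rfun u) (1 / 3) = rfun u := max_eq_left (le_of_lt h1)
        have e3 : max 0 (3 * rfun u - 2) = 0 := max_eq_left (by linarith)
        rw [latRaw, e1, e2, e3]
        ring
      rcases (abs_eq (rfun_nonneg u)).1 hri with hv | hv
      · refine ⟨i.castSucc, Or.inr ?_⟩
        show (Fin.snoc (fun j => toI (latRaw u j)) (toI (htRaw u)) : Cube (m + 1)) i.castSucc = 1
        rw [Fin.snoc_castSucc, hlat, hv, div_self hr0, toI_one]
      · refine ⟨i.castSucc, Or.inl ?_⟩
        show (Fin.snoc (fun j => toI (latRaw u j)) (toI (htRaw u)) : Cube (m + 1)) i.castSucc = 0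
        rw [Fin.snoc_castSucc, hlat, hv, neg_div, div_self hr0, toI_neg_one]

lemma collapse_of_boundary {m : ℕ} {u : Cube m} (hu : u ∈ Cube.boundary (Fin m)) :
    collapseCM m u = fun _ => 0 := by
  have hr : rfun u = 1 := rfun_eq_one_of_boundary hu
  funext i
  refine Fin.lastCases ?_ ?_ i
  · show (Fin.snoc (fun j => toI (latRaw u j)) (toI (htRaw u)) : Cube (m + 1)) (Fin.last m) = 0
    rw [Fin.snoc_last]
    have hh : htRaw u = -1 := by
      rw [htRaw, hr]
      norm_num
    rw [hh, toI_neg_one]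
  · intro j
    show (Fin.snoc (fun j => toI (latRaw u j)) (toI (htRaw u)) : Cube (m + 1)) j.castSucc = 0
    rw [Fin.snoc_castSucc]
    have hl : latRaw u j = -1 := by
      rw [latRaw, hr]
      norm_num
    rw [hl, toI_neg_one]
lemma sPart_continuous {k l : ℕ} : Continuous (sPart (k := k) (l := l)) :=
  continuous_pi fun i => continuous_apply _

lemma tPart_continuous {k l : ℕ} : Continuous (tPart (k := k) (l := l)) :=
  continuous_pi fun j => continuous_apply _

/-- The Whitehead product of two spheroids `a ∈ Π_{k+1}(X)`, `b ∈ Π_{l+1}(X)`: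
the composite of the collapse map `I^{k+l+1} → ∂I^{k+l+2} = ∂(I^{k+1} × I^{l+1})`
with the join map sending `(s, t)` to `a(s)` for `t ∈ ∂I^{l+1}` and to `b(t)` for
`s ∈ ∂I^{k+1}`. -/
def whSpheroid {X : Type*} [TopologicalSpace X] {x0 : X} {k l : ℕ}
    (a : GenLoop (Fin (k + 1)) X x0) (b : GenLoop (Fin (l + 1)) X x0) :
    GenLoop (Fin (k + 1 + l)) X x0 := by
  classical
  refine ⟨⟨Set.piecewise
      {u : Cube (k + 1 + l) |
        tPart (k := k) (l := l) (collapseCM (k + 1 + l) u) ∈ Cube.boundary (Fin (l + 1))}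
      (fun u => a.1 (sPart (k := k) (l := l) (collapseCM (k + 1 + l) u)))
      (fun u => b.1 (tPart (k := k) (l := l) (collapseCM (k + 1 + l) u))), ?_⟩, ?_⟩
  · have hSclosed : IsClosed {u : Cube (k + 1 + l) |
        tPart (k := k) (l := l) (collapseCM (k + 1 + l) u) ∈ Cube.boundary (Fin (l + 1))} :=
      (isClosed_cubeBoundary (l + 1)).preimage
        (tPart_continuous.comp (collapseCM (k + 1 + l)).continuous)
    have hS'closed : IsClosed {u : Cube (k + 1 + l) |
        sPart (k := k) (l := l) (collapseCM (k + 1 + l) u) ∈ Cube.boundary (Fin (k + 1))} :=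
      (isClosed_cubeBoundary (k + 1)).preimage
        (sPart_continuous.comp (collapseCM (k + 1 + l)).continuous)
    refine Continuous.piecewise ?_
      (a.1.continuous.comp (sPart_continuous.comp (collapseCM (k + 1 + l)).continuous))
      (b.1.continuous.comp (tPart_continuous.comp (collapseCM (k + 1 + l)).continuous))
    intro u hu
    rw [frontier_eq_closure_inter_closure] at hu
    have htmem : tPart (k := k) (l := l) (collapseCM (k + 1 + l) u) ∈
        Cube.boundary (Fin (l + 1)) := by
      have := hu.1
      rwa [hSclosed.closure_eq] at this
    have hsmem : sPart (k := k) (l := l) (collapseCM (k + 1 + l) u) ∈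
        Cube.boundary (Fin (k + 1)) := by
      have hsub : {u : Cube (k + 1 + l) |
          tPart (k := k) (l := l) (collapseCM (k + 1 + l) u) ∈
            Cube.boundary (Fin (l + 1))}ᶜ ⊆
          {u : Cube (k + 1 + l) |
            sPart (k := k) (l := l) (collapseCM (k + 1 + l) u) ∈
              Cube.boundary (Fin (k + 1))} := by
        intro u' hu'
        rcases mem_boundary_split (collapse_mem_boundary (k + 1 + l) u') with h | h
        · exact h
        · exact absurd h hu'
      have := hu.2
      have h2 := (closure_mono hsub).trans (le_of_eq hS'closed.closure_eq) this
      exact h2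
    rw [a.prop _ hsmem, b.prop _ htmem]
  · intro u hu
    have hc := collapse_of_boundary hu
    have htmem : tPart (k := k) (l := l) (collapseCM (k + 1 + l) u) ∈
        Cube.boundary (Fin (l + 1)) := by
      rw [hc]
      exact ⟨0, Or.inl rfl⟩
    have hsmem : sPart (k := k) (l := l) (collapseCM (k + 1 + l) u) ∈
        Cube.boundary (Fin (k + 1)) := by
      rw [hc]
      exact ⟨0, Or.inl rfl⟩
    show Set.piecewise
        {u : Cube (k + 1 + l) |
          tPart (k := k) (l := l) (collapseCM (k + 1 + l) u) ∈ Cube.boundary (Fin (l + 1))}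
        (fun u => a.1 (sPart (k := k) (l := l) (collapseCM (k + 1 + l) u)))
        (fun u => b.1 (tPart (k := k) (l := l) (collapseCM (k + 1 + l) u))) u = x0
    have humem : u ∈ {u : Cube (k + 1 + l) |
        tPart (k := k) (l := l) (collapseCM (k + 1 + l) u) ∈ Cube.boundary (Fin (l + 1))} :=
      htmem
    rw [Set.piecewise_eq_of_mem _ _ _ humem]
    exact a.prop _ hsmem

/-- The dimension bookkeeping for iterated Whitehead products:
`whDim r ks = ks 0 + ⋯ + ks r`. -/
def whDim : (r : ℕ) → (Fin (r + 1) → ℕ) → ℕ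
  | 0, ks => ks 0
  | r + 1, ks => whDim r (fun s => ks s.castSucc) + ks (Fin.last (r + 1))

/-- Transport of spheroids along an equality of dimensions. -/
def glCast {X : Type*} [TopologicalSpace X] {x0 : X} {n n' : ℕ} (h : n = n')
    (a : GenLoop (Fin n) X x0) : GenLoop (Fin n') X x0 := h ▸ a

/-- The iterated Whitehead product `[[…[[a₀, a₁], a₂], …], a_r]` of spheroids
`a_s ∈ Π_{ks s + 1}(X)`. -/
def whIter {X : Type*} [TopologicalSpace X] {x0 : X} :
    (r : ℕ) → (ks : Fin (r + 1) → ℕ) → (∀ s, GenLoop (Fin (ks s + 1)) X x0) →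
      GenLoop (Fin (whDim r ks + 1)) X x0
  | 0, _, as => as 0
  | r + 1, ks, as =>
      glCast (by simp only [whDim]; omega)
        (whSpheroid (whIter r (fun s => ks s.castSucc) (fun s => as s.castSucc))
          (as (Fin.last (r + 1))))

/-!
Replace each factor `a_s` of the iterated Whitehead product by a homotopic spheroid that is
constant near `∂I^{k_s}`, and let `B_T` be the product in which the factors with index in `T`
are replaced by the constant spheroid instead. The product only "sees" its `s`-th factor on a
closed set `K_s ⊆ Iⁿ`, and these sets are pairwise disjoint. Cover `Iⁿ` by the open sets
`U_s` that miss every `K_t` with `t ≠ s`: a union of at most `r` of them misses some `K_{s₀}`,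
so on it `B_T` and `B_{T ∪ {s₀}}` agree, and `deg f ≤ r` forces `∑_T (-1)^{|T|} f(B_T) = 0`.
By homotopy invariance `f(B_∅) = f(b)` and `f(B_T) = f(b₀)` for `T ≠ ∅`, whence
`f(b) = f(b₀)`.
-/

section

open Function

variable {X : Type*} [TopologicalSpace X] {x0 : X}

lemma zero_mem_cube_boundary (m : ℕ) : (0 : Cube (m + 1)) ∈ Cube.boundary (Fin (m + 1)) :=
  ⟨0, Or.inl rfl⟩

lemma map_mem_cube_boundary {m : ℕ} {g : I → I} (h0 : g 0 = 0) (h1 : g 1 = 1) {u : Cube m}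
    (hu : u ∈ Cube.boundary (Fin m)) : (fun i => g (u i)) ∈ Cube.boundary (Fin m) := by
  obtain ⟨i, hi | hi⟩ := hu
  exacts [⟨i, Or.inl (by simp [hi, h0])⟩, ⟨i, Or.inr (by simp [hi, h1])⟩]

lemma homotopic_of_forall_eq_comp {m k : ℕ} (a : GenLoop (Fin k) X x0)
    {c c' : GenLoop (Fin m) X x0} (H : C(I × Cube m, Cube k))
    (hH : ∀ t, ∀ u ∈ Cube.boundary (Fin m), H (t, u) ∈ Cube.boundary (Fin k))
    (hc : ∀ u, c u = a (H (0, u))) (hc' : ∀ u, c' u = a (H (1, u))) :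
    GenLoop.Homotopic c c' :=
  ⟨{ toContinuousMap := a.1.comp H
     map_zero_left := fun u => (hc u).symm
     map_one_left := fun u => (hc' u).symm
     prop' := fun t u hu => by
       simp [GenLoop.boundary a _ (hH t u hu), GenLoop.boundary c u hu] }⟩

lemma homotopic_const_of_forall_eq_comp {m k : ℕ} (a : GenLoop (Fin (k + 1)) X x0)
    {c : GenLoop (Fin m) X x0} (φ : C(Cube m, Cube (k + 1)))
    (hφ : ∀ u ∈ Cube.boundary (Fin m), φ u = 0) (hc : ∀ u, c u = a (φ u)) :
    GenLoop.Homotopic c GenLoop.const :=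
  homotopic_of_forall_eq_comp a ⟨fun p i => unitInterval.symm p.1 * φ p.2 i, by fun_prop⟩
    (fun t u hu => by
      simp only [ContinuousMap.coe_mk, hφ u hu, Pi.zero_apply, mul_zero]
      exact zero_mem_cube_boundary k)
    (fun u => by simp [hc])
    (fun u => by
      simp only [ContinuousMap.coe_mk, unitInterval.symm_one, zero_mul, GenLoop.const_apply]
      exact (GenLoop.boundary a _ (zero_mem_cube_boundary k)).symm)

def squashI (t x : I) : I := Set.projIcc 0 1 zero_le_one ((1 + t) * x - t / 2)

lemma continuous_squashI : Continuous fun p : I × I => squashI p.1 p.2 :=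
  continuous_projIcc.comp (by fun_prop)

@[simp]
lemma squashI_zero_left (x : I) : squashI 0 x = x := by
  simp [squashI]

@[simp]
lemma squashI_zero_right (t : I) : squashI t 0 = 0 :=
  Set.projIcc_of_le_left _ (by simp only [Set.Icc.coe_zero]; linarith [t.2.1])

@[simp]
lemma squashI_one_right (t : I) : squashI t 1 = 1 :=
  Set.projIcc_of_right_le _ (by simp only [Set.Icc.coe_one]; linarith [t.2.1])

lemma squashI_one_of_lt {x : I} (hx : (x : ℝ) < 1 / 4) : squashI 1 x = 0 :=
  Set.projIcc_of_le_left _ (by simp only [Set.Icc.coe_one]; linarith)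

lemma squashI_one_of_gt {x : I} (hx : 3 / 4 < (x : ℝ)) : squashI 1 x = 1 :=
  Set.projIcc_of_right_le _ (by simp only [Set.Icc.coe_one]; linarith)

def squashHomotopy (m : ℕ) : C(I × Cube m, Cube m) :=
  ⟨fun p i => squashI p.1 (p.2 i),
    continuous_pi fun i => continuous_squashI.comp
      (continuous_fst.prodMk ((continuous_apply i).comp continuous_snd))⟩

lemma squashHomotopy_mem_boundary {m : ℕ} (t : I) {u : Cube m}
    (hu : u ∈ Cube.boundary (Fin m)) : squashHomotopy m (t, u) ∈ Cube.boundary (Fin m) :=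
  map_mem_cube_boundary (squashI_zero_right t) (squashI_one_right t) hu

/-- The spheroid `a ∘ p¹` of the paper: homotopic to `a`, and constant on the collar
`squashNbhd m` of `∂Iᵐ`, where it agrees with `a ∘ p⁰ = const`. -/
def squashGL {m : ℕ} (a : GenLoop (Fin m) X x0) : GenLoop (Fin m) X x0 :=
  ⟨a.1.comp ((squashHomotopy m).curry 1),
    fun _ hu => GenLoop.boundary a _ (squashHomotopy_mem_boundary 1 hu)⟩

lemma squashGL_homotopic {m : ℕ} (a : GenLoop (Fin m) X x0) :
    GenLoop.Homotopic a (squashGL a) :=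
  homotopic_of_forall_eq_comp a (squashHomotopy m)
    (fun t _ hu => squashHomotopy_mem_boundary t hu)
    (fun u => by simp [squashHomotopy]) (fun _ => rfl)

def squashNbhd (m : ℕ) : Set (Cube m) :=
  {u | ∃ i, (u i : ℝ) < 1 / 4 ∨ 3 / 4 < (u i : ℝ)}

lemma isOpen_squashNbhd (m : ℕ) : IsOpen (squashNbhd m) := by
  simp only [squashNbhd, Set.ofPred_exists, Set.ofPred_or]
  exact isOpen_iUnion fun i =>
    (isOpen_lt (by fun_prop) continuous_const).union (isOpen_lt continuous_const (by fun_prop))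

lemma cube_boundary_subset_squashNbhd (m : ℕ) : Cube.boundary (Fin m) ⊆ squashNbhd m := by
  rintro u ⟨i, hi | hi⟩
  exacts [⟨i, Or.inl (by norm_num [hi])⟩, ⟨i, Or.inr (by norm_num [hi])⟩]

lemma squashGL_apply_of_mem_squashNbhd {m : ℕ} (a : GenLoop (Fin m) X x0) {u : Cube m}
    (hu : u ∈ squashNbhd m) : squashGL a u = x0 := by
  obtain ⟨i, hi⟩ := hu
  exact GenLoop.boundary a _
    ⟨i, hi.imp (fun h => squashI_one_of_lt h) (fun h => squashI_one_of_gt h)⟩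

def ccast {n n' : ℕ} (h : n = n') (u : Cube n') : Cube n := fun i => u (Fin.cast h i)

lemma continuous_ccast {n n' : ℕ} (h : n = n') : Continuous (ccast h) :=
  continuous_pi fun _ => continuous_apply _

lemma glCast_apply {n n' : ℕ} (h : n = n') (a : GenLoop (Fin n) X x0) (u : Cube n') :
    glCast h a u = a (ccast h u) := by
  subst h; rfl

lemma glCast_homotopic {n n' : ℕ} (h : n = n') {a b : GenLoop (Fin n) X x0}
    (hab : GenLoop.Homotopic a b) : GenLoop.Homotopic (glCast h a) (glCast h b) := by
  subst h; exact hab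

lemma glCast_const {n n' : ℕ} (h : n = n') :
    glCast h (GenLoop.const : GenLoop (Fin n) X x0) = GenLoop.const := by
  subst h; rfl

def whLeft (k l : ℕ) : C(Cube (k + 1 + l), Cube (k + 1)) :=
  ⟨fun u => sPart (k := k) (l := l) (collapseCM (k + 1 + l) u),
    sPart_continuous.comp (collapseCM _).continuous⟩

def whRight (k l : ℕ) : C(Cube (k + 1 + l), Cube (l + 1)) :=
  ⟨fun u => tPart (k := k) (l := l) (collapseCM (k + 1 + l) u),
    tPart_continuous.comp (collapseCM _).continuous⟩

section Whitehead

variable {k l : ℕ}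

lemma whLeft_mem_boundary_or_whRight_mem_boundary (u : Cube (k + 1 + l)) :
    whLeft k l u ∈ Cube.boundary (Fin (k + 1)) ∨
      whRight k l u ∈ Cube.boundary (Fin (l + 1)) :=
  mem_boundary_split (collapse_mem_boundary _ u)

lemma whLeft_of_mem_boundary {u : Cube (k + 1 + l)} (hu : u ∈ Cube.boundary (Fin (k + 1 + l))) :
    whLeft k l u = 0 := by
  change sPart (k := k) (l := l) (collapseCM (k + 1 + l) u) = 0
  rw [collapse_of_boundary hu]
  rfl

lemma whRight_of_mem_boundary {u : Cube (k + 1 + l)} (hu : u ∈ Cube.boundary (Fin (k + 1 + l))) :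
    whRight k l u = 0 := by
  change tPart (k := k) (l := l) (collapseCM (k + 1 + l) u) = 0
  rw [collapse_of_boundary hu]
  rfl

lemma whSpheroid_apply (a : GenLoop (Fin (k + 1)) X x0) (b : GenLoop (Fin (l + 1)) X x0)
    (u : Cube (k + 1 + l)) :
    whSpheroid a b u = if whRight k l u ∈ Cube.boundary (Fin (l + 1))
      then a (whLeft k l u) else b (whRight k l u) :=
  rfl

lemma continuous_parametric_whSpheroid {Y : Type*} [TopologicalSpace Y]
    {α : Y × Cube (k + 1) → X} {β : Y × Cube (l + 1) → X} (hα : Continuous α)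
    (hβ : Continuous β) (hα0 : ∀ y, ∀ v ∈ Cube.boundary (Fin (k + 1)), α (y, v) = x0)
    (hβ0 : ∀ y, ∀ v ∈ Cube.boundary (Fin (l + 1)), β (y, v) = x0) :
    Continuous fun p : Y × Cube (k + 1 + l) =>
      if whRight k l p.2 ∈ Cube.boundary (Fin (l + 1)) then α (p.1, whLeft k l p.2)
      else β (p.1, whRight k l p.2) := by
  have hR : IsClosed {p : Y × Cube (k + 1 + l) | whRight k l p.2 ∈ Cube.boundary _} :=
    (isClosed_cubeBoundary _).preimage (by fun_prop)
  have hL : IsClosed {p : Y × Cube (k + 1 + l) | whLeft k l p.2 ∈ Cube.boundary _} :=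
    (isClosed_cubeBoundary _).preimage (by fun_prop)
  refine Continuous.if (fun p hp => ?_) (hα.comp (by fun_prop)) (hβ.comp (by fun_prop))
  rw [frontier_eq_closure_inter_closure, hR.closure_eq] at hp
  have hpL : whLeft k l p.2 ∈ Cube.boundary (Fin (k + 1)) :=
    hL.closure_subset_iff.2
      (fun q hq => (whLeft_mem_boundary_or_whRight_mem_boundary q.2).resolve_right hq) hp.2
  rw [hα0 _ _ hpL, hβ0 _ _ hp.1]

lemma whSpheroid_homotopic {a a' : GenLoop (Fin (k + 1)) X x0}
    {b b' : GenLoop (Fin (l + 1)) X x0} (ha : GenLoop.Homotopic a a')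
    (hb : GenLoop.Homotopic b b') :
    GenLoop.Homotopic (whSpheroid a b) (whSpheroid a' b') := by
  obtain ⟨H⟩ := ha
  obtain ⟨G⟩ := hb
  have hH : ∀ t, ∀ v ∈ Cube.boundary (Fin (k + 1)), H (t, v) = x0 :=
    fun t v hv => (H.eq_fst t hv).trans (GenLoop.boundary a v hv)
  have hG : ∀ t, ∀ v ∈ Cube.boundary (Fin (l + 1)), G (t, v) = x0 :=
    fun t v hv => (G.eq_fst t hv).trans (GenLoop.boundary b v hv)
  refine ⟨{ toFun := fun p => if whRight k l p.2 ∈ Cube.boundary (Fin (l + 1))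
                then H (p.1, whLeft k l p.2) else G (p.1, whRight k l p.2)
            continuous_toFun := continuous_parametric_whSpheroid H.continuous G.continuous hH hG
            map_zero_left := fun u => by simp [whSpheroid_apply]
            map_one_left := fun u => by simp [whSpheroid_apply]
            prop' := fun t u hu => ?_ }⟩
  have hR : whRight k l u ∈ Cube.boundary (Fin (l + 1)) := by
    rw [whRight_of_mem_boundary hu]; exact zero_mem_cube_boundary l
  have hL : whLeft k l u ∈ Cube.boundary (Fin (k + 1)) := by
    rw [whLeft_of_mem_boundary hu]; exact zero_mem_cube_boundary k
  simp only [ContinuousMap.coe_mk, if_pos hR, hH t _ hL]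
  exact (GenLoop.boundary (whSpheroid a b) u hu).symm

lemma whSpheroid_const_right (a : GenLoop (Fin (k + 1)) X x0) :
    GenLoop.Homotopic (whSpheroid a (GenLoop.const : GenLoop (Fin (l + 1)) X x0))
      GenLoop.const := by
  refine homotopic_const_of_forall_eq_comp a (whLeft k l)
    (fun _ => whLeft_of_mem_boundary) (fun u => ?_)
  rw [whSpheroid_apply]
  split_ifs with hR
  · rfl
  · exact (GenLoop.boundary a _
      ((whLeft_mem_boundary_or_whRight_mem_boundary u).resolve_right hR)).symm

lemma whSpheroid_const_left (b : GenLoop (Fin (l + 1)) X x0) :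
    GenLoop.Homotopic (whSpheroid (GenLoop.const : GenLoop (Fin (k + 1)) X x0) b)
      GenLoop.const := by
  refine homotopic_const_of_forall_eq_comp b (whRight k l)
    (fun _ => whRight_of_mem_boundary) (fun u => ?_)
  rw [whSpheroid_apply]
  split_ifs with hR
  · exact (GenLoop.boundary b _ hR).symm
  · rfl

end Whitehead

lemma whDim_succ (r : ℕ) (ks : Fin (r + 2) → ℕ) :
    whDim r (fun s => ks s.castSucc) + 1 + ks (Fin.last (r + 1)) = whDim (r + 1) ks + 1 := by
  simp only [whDim]; omega

lemma whIter_succ (r : ℕ) (ks : Fin (r + 2) → ℕ) (as : ∀ s, GenLoop (Fin (ks s + 1)) X x0) :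
    whIter (r + 1) ks as = glCast (whDim_succ r ks)
      (whSpheroid (whIter r _ fun s => as s.castSucc) (as (Fin.last (r + 1)))) :=
  rfl

lemma whIter_homotopic : ∀ (r : ℕ) (ks : Fin (r + 1) → ℕ)
    {as as' : ∀ s, GenLoop (Fin (ks s + 1)) X x0},
    (∀ s, GenLoop.Homotopic (as s) (as' s)) →
      GenLoop.Homotopic (whIter r ks as) (whIter r ks as')
  | 0, _, _, _, h => h 0
  | r + 1, _, _, _, h => glCast_homotopic _ (whSpheroid_homotopic
      (whIter_homotopic r _ fun s => h s.castSucc) (h (Fin.last (r + 1))))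

lemma whIter_homotopic_const {r : ℕ} {ks : Fin (r + 1) → ℕ}
    {as : ∀ s, GenLoop (Fin (ks s + 1)) X x0} (s₀ : Fin (r + 1))
    (h : GenLoop.Homotopic (as s₀) GenLoop.const) :
    GenLoop.Homotopic (whIter r ks as) GenLoop.const := by
  induction r with
  | zero => rwa [Fin.eq_zero s₀] at h
  | succ r ih =>
    rw [whIter_succ, ← glCast_const (whDim_succ r ks)]
    refine glCast_homotopic _ ?_
    induction s₀ using Fin.lastCases with
    | last => exact (whSpheroid_homotopic (.refl _) h).trans (whSpheroid_const_right _)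
    | cast j => exact (whSpheroid_homotopic (ih j h) (.refl _)).trans (whSpheroid_const_left _)

lemma pairwise_disjoint_on_lastCases {α : Type*} {r : ℕ} {A : Set α} {K : Fin r → Set α}
    (hK : Pairwise (Disjoint on K)) (hA : ∀ i, Disjoint A (K i)) :
    Pairwise (Disjoint on (Fin.lastCases A K : Fin (r + 1) → Set α)) := by
  intro s s' hss'
  induction s using Fin.lastCases <;> induction s' using Fin.lastCases <;>
    simp only [onFun, Fin.lastCases_last, Fin.lastCases_castSucc]
  · exact absurd rfl hss'
  · exact hA _
  · exact (hA _).symm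
  · exact hK (ne_of_apply_ne _ hss')

/-- Locality of iterated Whitehead products: if the factors are only changed away from
neighbourhoods `N s` of the boundaries, then the product changes only on the disjoint closed
sets `K s`, each depending on a single factor. -/
theorem exists_pairwise_disjoint_whIter_apply_eq (r : ℕ) (ks : Fin (r + 1) → ℕ)
    (N : ∀ s, Set (Cube (ks s + 1))) (hN : ∀ s, IsOpen (N s))
    (hbd : ∀ s, Cube.boundary (Fin (ks s + 1)) ⊆ N s) :
    ∃ K : Fin (r + 1) → Set (Cube (whDim r ks + 1)),
      (∀ s, IsClosed (K s)) ∧ Pairwise (Disjoint on K) ∧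
      ∀ c c' : ∀ s, GenLoop (Fin (ks s + 1)) X x0, (∀ s, Set.EqOn (c s) (c' s) (N s)) →
        ∀ u, (∀ s, u ∈ K s → c s = c' s) → whIter r ks c u = whIter r ks c' u := by
  induction r with
  | zero =>
    refine ⟨fun _ => (N 0)ᶜ, fun _ => (hN 0).isClosed_compl,
      fun s s' h => (h (Subsingleton.elim (α := Fin 1) s s')).elim, fun c c' hc u hu => ?_⟩
    by_cases hu0 : u ∈ N 0
    · exact hc 0 hu0
    · exact congrArg (fun a : GenLoop _ X x0 => a u) (hu 0 hu0)
  | succ r ih =>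
    obtain ⟨K, hKc, hKd, hK⟩ := ih (fun s => ks s.castSucc) (fun s => N s.castSucc)
      (fun s => hN _) (fun s => hbd _)
    have he := continuous_ccast (whDim_succ r ks)
    refine ⟨Fin.lastCases {u | whRight _ _ (ccast (whDim_succ r ks) u) ∉ N (Fin.last (r + 1))}
      fun s => {u | whRight _ _ (ccast (whDim_succ r ks) u) ∈ Cube.boundary _ ∧
        whLeft _ _ (ccast (whDim_succ r ks) u) ∈ K s},
      fun s => ?_, ?_, fun c c' hc u hu => ?_⟩
    · induction s using Fin.lastCases with
      | last =>
        simp only [Fin.lastCases_last]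
        exact (hN _).isClosed_compl.preimage ((whRight _ _).continuous.comp he)
      | cast s =>
        simp only [Fin.lastCases_castSucc]
        exact ((isClosed_cubeBoundary _).preimage ((whRight _ _).continuous.comp he)).inter
          ((hKc s).preimage ((whLeft _ _).continuous.comp he))
    · exact pairwise_disjoint_on_lastCases
        (fun _ _ hij => ((hKd hij).preimage _).mono (fun _ hu => hu.2) (fun _ hu => hu.2))
        (fun _ => Set.disjoint_left.2 fun u hu hu' => hu (hbd _ hu'.1))
    · rw [whIter_succ, whIter_succ, glCast_apply, glCast_apply, whSpheroid_apply,
        whSpheroid_apply]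
      split_ifs with hR
      · exact hK _ _ (fun s => hc s.castSucc) _ fun s hs =>
          hu s.castSucc (by simp only [Fin.lastCases_castSucc]; exact ⟨hR, hs⟩)
      · by_cases hNl : whRight _ _ (ccast (whDim_succ r ks) u) ∈ N (Fin.last (r + 1))
        · exact hc _ hNl
        · rw [hu (Fin.last (r + 1)) (by simp only [Fin.lastCases_last]; exact hNl)]

section Alternating

variable {α L : Type*} [Fintype α] [DecidableEq α] [AddCommGroup L]

lemma sum_neg_one_pow_card_smul_eq_zero_of_insert_eq (v : Finset α → L) (a : α)
    (hv : ∀ T, a ∉ T → v (insert a T) = v T) :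
    ∑ T : Finset α, (-1 : ℤ) ^ T.card • v T = 0 := by
  rw [← Finset.powerset_univ, ← Finset.insert_erase (Finset.mem_univ a),
    Finset.sum_powerset_insert (Finset.notMem_erase a _), ← Finset.sum_add_distrib]
  refine Finset.sum_eq_zero fun T hT => ?_
  have haT : a ∉ T := fun h => Finset.notMem_erase a _ (Finset.mem_powerset.1 hT h)
  rw [hv T haT, Finset.card_insert_of_notMem haT, pow_succ, mul_neg_one, neg_smul,
    add_neg_cancel]

lemma eq_of_sum_neg_one_pow_card_smul_eq_zero [Nonempty α] {v : Finset α → L} {c : L}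
    (hv : ∀ T, T ≠ ∅ → v T = c)
    (hsum : ∑ T : Finset α, (-1 : ℤ) ^ T.card • v T = 0) :
    v ∅ = c := by
  have hc := sum_neg_one_pow_card_smul_eq_zero_of_insert_eq (fun _ => c)
    (Classical.arbitrary α) fun _ _ => rfl
  rw [← sub_eq_zero]
  calc v ∅ - c = ∑ T : Finset α, (-1 : ℤ) ^ T.card • (v T - c) := by
        rw [Finset.sum_eq_single ∅ (fun T _ hT => by rw [hv T hT, sub_self, smul_zero])
          (by simp)]
        simp
    _ = 0 := by simp only [smul_sub, Finset.sum_sub_distrib, hsum, hc, sub_zero]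

end Alternating

section Degree

variable {L : Type*} [AddCommGroup L] {n r : ℕ}

lemma sphRestrict_congr {a b : GenLoop (Fin n) X x0} {E : Set (Cube n)}
    (h : ∀ u ∈ E, a u = b u) : sphRestrict a E = sphRestrict b E :=
  Subtype.ext (ContinuousMap.ext fun u => h u u.2)

lemma exists_of_mem_coverUnions {Γ : Finset (Set (Cube n))} {E : Set (Cube n)}
    (hE : E ∈ coverUnions Γ r) : ∃ S ⊆ Γ, S.card ≤ r ∧ E = ⋃₀ ↑S := by
  simp only [coverUnions, Finset.pure_def, Finset.bind_def, Finset.mem_sup, Finset.mem_singleton,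
    Finset.mem_image, Finset.mem_filter, Finset.mem_powerset] at hE
  obtain ⟨_, ⟨S, hS, rfl⟩, rfl⟩ := hE
  exact ⟨S, hS.1, hS.2, rfl⟩

lemma exists_disjoint_of_mem_coverUnions {ι : Type*} [Fintype ι] (hr : r < Fintype.card ι)
    {Γ : Finset (Set (Cube n))} {K : ι → Set (Cube n)}
    (hΓ : ∀ e ∈ Γ, ∃ i, ∀ j, j ≠ i → Disjoint e (K j)) {E : Set (Cube n)}
    (hE : E ∈ coverUnions Γ r) : ∃ i, Disjoint E (K i) := by
  have : Nonempty ι := Fintype.card_pos_iff.1 (by omega)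
  obtain ⟨S, hSΓ, hSr, rfl⟩ := exists_of_mem_coverUnions hE
  choose! idx hidx using hΓ
  have hcard : (S.image idx).card < (Finset.univ : Finset ι).card := by
    rw [Finset.card_univ]
    exact Finset.card_image_le.trans_lt (hSr.trans_lt hr)
  obtain ⟨i, -, hi⟩ := Finset.exists_mem_notMem_of_card_lt_card hcard
  exact ⟨i, Set.disjoint_sUnion_left.2 fun e he =>
    hidx e (hSΓ he) i fun h => hi (h ▸ Finset.mem_image_of_mem idx he)⟩

theorem HasDegLE.sum_neg_one_pow_card_smul_eq_zero {ι : Type*} [Fintype ι] [DecidableEq ι]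
    {f : GenLoop (Fin n) X x0 → L} (hf : HasDegLE f r) (hr : r < Fintype.card ι)
    {K : ι → Set (Cube n)} (hK : ∀ i, IsClosed (K i)) (hKd : Pairwise (Disjoint on K))
    (B : Finset ι → GenLoop (Fin n) X x0)
    (hB : ∀ T T' u, (∀ i, u ∈ K i → (i ∈ T ↔ i ∈ T')) → B T u = B T' u) :
    ∑ T : Finset ι, (-1 : ℤ) ^ T.card • f (B T) = 0 := by
  have : Nonempty ι := Fintype.card_pos_iff.1 (by omega)
  let U : ι → Set (Cube n) := fun i => ⋂ j ∈ ({i}ᶜ : Finset ι), (K j)ᶜ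
  have hUK : ∀ i j, j ≠ i → Disjoint (U i) (K j) := fun i j hj =>
    Set.disjoint_left.2 fun u hu => Set.mem_iInter₂.1 hu j (by simpa using hj)
  have hU : ∀ u, ∃ i, u ∈ U i := by
    intro u
    by_cases h : ∃ i, u ∈ K i
    · obtain ⟨i, hi⟩ := h
      exact ⟨i, Set.mem_iInter₂.2 fun j hj =>
        Set.disjoint_left.1 (hKd (Ne.symm (by simpa using hj))) hi⟩
    · exact ⟨Classical.arbitrary ι, Set.mem_iInter₂.2 fun j _ => not_exists.1 h j⟩
  obtain ⟨g, hg⟩ := hf (Finset.univ.image U)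
    (by simpa using fun i => isOpen_biInter_finset fun j _ => (hK j).isOpen_compl)
    (by simpa using hU)
  simp only [hg, Finset.smul_sum]
  rw [Finset.sum_comm]
  refine Finset.sum_eq_zero fun E hE => ?_
  obtain ⟨i, hi⟩ :=
    exists_disjoint_of_mem_coverUnions hr (by simpa using fun i => ⟨i, hUK i⟩) hE
  refine sum_neg_one_pow_card_smul_eq_zero_of_insert_eq _ i fun T _ =>
    congrArg (g E) (sphRestrict_congr fun u hu => hB _ _ u fun j hj => ?_)
  have hji : j ≠ i := by
    rintro rfl
    exact Set.disjoint_left.1 hi hu hj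
  simp [hji]

end Degree

end

/-- Here `k_s = ks s + 1` and `v_s = [as s]`. -/
theorem homotopy_invariant_functional_kills_whitehead
    {X : Type*} [TopologicalSpace X] (x0 : X) {L : Type*} [AddCommGroup L]
    (n r : ℕ) (f : GenLoop (Fin n) X x0 → L)
    (hinv : ∀ a b : GenLoop (Fin n) X x0, GenLoop.Homotopic a b → f a = f b)
    (hdeg : HasDegLE f r)
    (ks : Fin (r + 1) → ℕ) (as : ∀ s, GenLoop (Fin (ks s + 1)) X x0)
    (hdim : whDim r ks + 1 = n)
    (b0 b : GenLoop (Fin n) X x0)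
    (hb0 : GenLoop.Homotopic b0 GenLoop.const)
    (hb : GenLoop.Homotopic b (glCast hdim (whIter r ks as))) :
    f b = f b0 := by
  obtain ⟨K, hKc, hKd, hK⟩ := exists_pairwise_disjoint_whIter_apply_eq (x0 := x0) r ks
    (fun s => squashNbhd (ks s + 1)) (fun _ => isOpen_squashNbhd _)
    (fun _ => cube_boundary_subset_squashNbhd _)
  let c (T : Finset (Fin (r + 1))) (s : Fin (r + 1)) : GenLoop (Fin (ks s + 1)) X x0 :=
    if s ∈ T then GenLoop.const else squashGL (as s)
  let B (T : Finset (Fin (r + 1))) : GenLoop (Fin n) X x0 := glCast hdim (whIter r ks (c T))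
  have hsum := hdeg.sum_neg_one_pow_card_smul_eq_zero (by simp)
    (fun s => (hKc s).preimage (continuous_ccast hdim)) (fun s s' h => (hKd h).preimage _) B
    fun T T' u hu => by
      simp only [B, glCast_apply]
      refine hK (c T) (c T') (fun s v hv => ?_) _ fun s hs => by simp only [c, hu s hs]
      simp only [c]
      split_ifs <;> simp [squashGL_apply_of_mem_squashNbhd _ hv]
  have hB_empty : f (B ∅) = f b := hinv _ _ <| (glCast_homotopic hdim <| whIter_homotopic r ks
    fun s => by simpa [c] using (squashGL_homotopic (as s)).symm).trans hb.symm
  have hB_nonempty : ∀ T, T ≠ ∅ → f (B T) = f b0 := by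
    intro T hT
    obtain ⟨s, hs⟩ := Finset.nonempty_iff_ne_empty.2 hT
    have hnull := glCast_homotopic hdim (whIter_homotopic_const (ks := ks) (as := c T) s
      (by simp only [c, if_pos hs]; exact .refl _))
    rw [glCast_const] at hnull
    exact hinv _ _ (hnull.trans hb0.symm)
  rw [← hB_empty]
  exact eq_of_sum_neg_one_pow_card_smul_eq_zero hB_nonempty hsum

end
end
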